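/- Let ω : ℝ → ℝ be uniformly continuous on [0,∞). If the limit as t → ∞ of ∫₀ᵗ ω(τ) dτ exists and is finite, then ω(t) → 0 as t → ∞. -/
import Mathlib

open Filter

/-- Barbalat's lemma: if ω is uniformly continuous on [0,∞) and the
improper integral ∫₀ᵗ ω converges to a finite limit as t → ∞, then ω(t) → 0. -/
theorem barbalat (ω : ℝ → ℝ)
    (hUC : UniformContinuousOn ω (Set.Ici 0))
    (hlim : ∃ l : ℝ, Filter.Tendsto (fun t => ∫ τ in (0:ℝ)..t, ω τ)
      Filter.atTop (nhds l)) :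
    Filter.Tendsto ω Filter.atTop (nhds 0) := by
  obtain ⟨l, hl⟩ := hlim
  have hcont : ContinuousOn ω (Set.Ici 0) := hUC.continuousOn
  have hint : ∀ a b : ℝ, 0 ≤ a → 0 ≤ b →
      IntervalIntegrable ω MeasureTheory.volume a b := by
    intro a b ha hb
    apply ContinuousOn.intervalIntegrable
    apply hcont.mono
    intro x hx
    rcases le_total a b with h | h
    · rw [Set.uIcc_of_le h] at hx; exact le_trans ha hx.1
    · rw [Set.uIcc_of_ge h] at hx; exact le_trans hb hx.1
  by_contra hnot
  rw [Metric.tendsto_atTop] at hnot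
  push_neg at hnot
  obtain ⟨ε, hε, hfreq⟩ := hnot
  rw [Metric.uniformContinuousOn_iff] at hUC
  obtain ⟨δ, hδ, hδ'⟩ := hUC (ε / 2) (by linarith)
  set d := δ / 2 with hd
  have hdpos : 0 < d := by positivity
  have hG : Tendsto
      (fun t => (∫ τ in (0:ℝ)..(t + d), ω τ) - ∫ τ in (0:ℝ)..t, ω τ)
      atTop (nhds 0) := by
    have h1 : Tendsto (fun t => ∫ τ in (0:ℝ)..(t + d), ω τ) atTop (nhds l) :=
      hl.comp (tendsto_atTop_add_const_right _ d tendsto_id)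
    simpa using h1.sub hl
  rw [Metric.tendsto_atTop] at hG
  obtain ⟨T, hT⟩ := hG (ε * d / 2) (by positivity)
  obtain ⟨t, ht, hωt⟩ := hfreq (max T 0)
  have htT : t ≥ T := le_trans (le_max_left _ _) ht
  have ht0 : (0:ℝ) ≤ t := le_trans (le_max_right _ _) ht
  have htd : t ≤ t + d := by linarith
  have hωt' : ε ≤ |ω t| := by
    have : dist (ω t) 0 = |ω t| := by simp [Real.dist_eq]
    rw [this] at hωt; exact hωt
  -- the increment of the integral equals ∫_t^{t+d} ω
  have hsub : (∫ τ in (0:ℝ)..(t + d), ω τ) - (∫ τ in (0:ℝ)..t, ω τ)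
      = ∫ τ in t..(t + d), ω τ := by
    rw [intervalIntegral.integral_interval_sub_left
      (hint 0 (t + d) le_rfl (by linarith)) (hint 0 t le_rfl ht0)]
  have hbound := hT t htT
  rw [Real.dist_eq, sub_zero, hsub] at hbound
  -- pointwise closeness on [t, t+d]
  have hclose : ∀ τ ∈ Set.Icc t (t + d), |ω τ - ω t| < ε / 2 := by
    intro τ hτ
    have hτ0 : (0:ℝ) ≤ τ := le_trans ht0 hτ.1
    have hdist : dist τ t < δ := by
      rw [Real.dist_eq, abs_sub_lt_iff]
      constructor <;> [linarith [hτ.2]; linarith [hτ.1]]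
    have := hδ' τ hτ0 t ht0 hdist
    rwa [Real.dist_eq] at this
  have hintt : IntervalIntegrable ω MeasureTheory.volume t (t + d) :=
    hint t (t + d) ht0 (by linarith)
  have hconst : ∀ c : ℝ, (∫ _ in t..(t + d), c) = d * c := by
    intro c
    rw [intervalIntegral.integral_const]
    simp [smul_eq_mul]
  rcases le_abs.mp hωt' with hpos | hneg
  · -- ω t ≥ ε : ω ≥ ε/2 on the interval, integral ≥ ε*d/2
    have hlow : (∫ τ in t..(t + d), (ε / 2)) ≤ ∫ τ in t..(t + d), ω τ := by
      apply intervalIntegral.integral_mono_on htd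
        (intervalIntegrable_const) hintt
      intro τ hτ
      have := hclose τ hτ
      have h2 := abs_lt.mp this
      linarith [h2.1]
    rw [hconst] at hlow
    have : |∫ τ in t..(t + d), ω τ| ≥ ε * d / 2 := by
      have h0 : (0:ℝ) ≤ ∫ τ in t..(t + d), ω τ := by nlinarith
      rw [abs_of_nonneg h0]; nlinarith
    linarith
  · -- ω t ≤ -ε : ω ≤ -ε/2 on the interval, integral ≤ -ε*d/2
    have hup : (∫ τ in t..(t + d), ω τ) ≤ ∫ τ in t..(t + d), (-(ε / 2)) := by
      apply intervalIntegral.integral_mono_on htd hintt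
        (intervalIntegrable_const)
      intro τ hτ
      have := hclose τ hτ
      have h2 := abs_lt.mp this
      linarith [h2.2]
    rw [hconst] at hup
    have : |∫ τ in t..(t + d), ω τ| ≥ ε * d / 2 := by
      have h0 : (∫ τ in t..(t + d), ω τ) ≤ 0 := by nlinarith
      rw [abs_of_nonpos h0]; nlinarith
    linarith
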